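/- arXiv:2510.20213 — 2 statements merged into one kernel-verified Lean document; each statement's English description precedes it below -/
import Mathlib

section
/- Let I be an arbitrary index set and (aᵢ, bᵢ) ∈ ℝⁿ × ℝ for i ∈ I. The system {x ∈ ℝⁿ : aᵢᵀx ≤ bᵢ for all i ∈ I} is nonempty if and only if the vector (0ₙ, 1) does not belong to the closed conical hull of {(−aᵢ, −bᵢ) : i ∈ I}. -/
/-! By Hahn–Banach, a point lies outside the closed conical hull of `S` iff some continuous
functional is nonnegative on `S` and negative at the point. On `ℝⁿ × ℝ` such a functional has
the form `(z, t) ↦ ⟪y, z⟫ - s t`; negativity at `(0, 1)` means `s > 0`, and nonnegativity at the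
generators `(-aᵢ, -bᵢ)` says exactly that `y / s` solves the system. -/

open scoped RealInnerProductSpace

/-- The conical hull (set of all nonnegative finite linear combinations) of a set. -/
def coneHull {E : Type*} [AddCommMonoid E] [Module ℝ E] (S : Set E) : Set E :=
  {z | ∃ (ι : Type) (t : Finset ι) (c : ι → ℝ) (v : ι → E),
    (∀ i, 0 ≤ c i) ∧ (∀ i ∈ t, v i ∈ S) ∧ z = ∑ i ∈ t, c i • v i}

section coneHull

variable {E : Type*}

section AddCommMonoid

variable [AddCommMonoid E] [Module ℝ E] (S : Set E)

lemma zero_mem_coneHull : (0 : E) ∈ coneHull S :=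
  ⟨Empty, ∅, Empty.elim, Empty.elim, (·.elim), (·.elim), by simp⟩

lemma smul_mem_coneHull {c : ℝ} (hc : 0 ≤ c) {x : E} (hx : x ∈ coneHull S) :
    c • x ∈ coneHull S := by
  obtain ⟨ι, t, d, v, hd, hv, rfl⟩ := hx
  refine ⟨ι, t, fun i => c * d i, v, fun i => mul_nonneg hc (hd i), hv, ?_⟩
  simp only [Finset.smul_sum, smul_smul]

lemma convex_coneHull : Convex ℝ (coneHull S) := by
  rintro x ⟨ι₁, t₁, c₁, v₁, hc₁, hv₁, rfl⟩ y ⟨ι₂, t₂, c₂, v₂, hc₂, hv₂, rfl⟩ p q hp hq -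
  refine ⟨ι₁ ⊕ ι₂, t₁.disjSum t₂, Sum.elim (fun i => p * c₁ i) (fun j => q * c₂ j),
    Sum.elim v₁ v₂, ?_, ?_, ?_⟩
  · rintro (i | j)
    · exact mul_nonneg hp (hc₁ i)
    · exact mul_nonneg hq (hc₂ j)
  · rintro (i | j) hi
    · exact hv₁ i (by simpa using hi)
    · exact hv₂ j (by simpa using hi)
  · simp [Finset.sum_disjSum, Finset.smul_sum, mul_smul]

lemma subset_coneHull : S ⊆ coneHull S := fun x hx =>
  ⟨Unit, Finset.univ, fun _ => 1, fun _ => x, fun _ => zero_le_one, fun _ _ => hx, by simp⟩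

lemma nonneg_on_coneHull {f : E →ₗ[ℝ] ℝ} (hf : ∀ s ∈ S, 0 ≤ f s) :
    ∀ z ∈ coneHull S, 0 ≤ f z := by
  rintro _ ⟨ι, t, c, v, hc, hv, rfl⟩
  rw [map_sum]
  exact Finset.sum_nonneg fun i hi => by
    rw [map_smul, smul_eq_mul]
    exact mul_nonneg (hc i) (hf _ (hv i hi))

end AddCommMonoid

variable [TopologicalSpace E] [AddCommGroup E] [Module ℝ E] [IsTopologicalAddGroup E]
  [ContinuousSMul ℝ E] [LocallyConvexSpace ℝ E] {S : Set E}

/-- Farkas' lemma for an arbitrary set of generators. -/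
theorem mem_closure_coneHull_iff {z : E} :
    z ∈ closure (coneHull S) ↔ ∀ f : StrongDual ℝ E, (∀ s ∈ S, 0 ≤ f s) → 0 ≤ f z := by
  constructor
  · intro hz f hf
    have hK : closure (coneHull S) ⊆ f ⁻¹' Set.Ici 0 :=
      closure_minimal (nonneg_on_coneHull S (f := f.toLinearMap) hf)
        (isClosed_Ici.preimage f.continuous)
    exact hK hz
  · intro h
    by_contra hz
    obtain ⟨f, u, hfu, hK⟩ := geometric_hahn_banach_point_closed
      (convex_coneHull S).closure isClosed_closure hz
    have hu : u < 0 := by simpa using hK 0 (subset_closure (zero_mem_coneHull S))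
    -- `f` is bounded below by `u` on a cone, so it is nonnegative there.
    have hf : ∀ w ∈ coneHull S, 0 ≤ f w := by
      intro w hw
      by_contra! hfw
      have hc : 0 ≤ (u - 1) / f w := div_nonneg_of_nonpos (by linarith) hfw.le
      have := hK _ (subset_closure (smul_mem_coneHull S hc hw))
      rw [map_smul, smul_eq_mul, div_mul_cancel₀ _ hfw.ne] at this
      linarith
    linarith [h f fun s hs => hf s (subset_coneHull S hs)]

end coneHull

lemma StrongDual.exists_apply_prod_eq {F : Type*} [NormedAddCommGroup F] [InnerProductSpace ℝ F]
    [CompleteSpace F] (f : StrongDual ℝ (F × ℝ)) :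
    ∃ y : F, ∀ z t, f (z, t) = ⟪y, z⟫ + t * f (0, 1) := by
  refine ⟨(InnerProductSpace.toDual ℝ F).symm (f.comp (.inl ℝ F ℝ)), fun z t => ?_⟩
  rw [InnerProductSpace.toDual_symm_apply, ← smul_eq_mul, ← map_smul,
    ContinuousLinearMap.comp_apply, ← map_add]
  simp

theorem linear_system_nonempty_iff
    {n : ℕ} {I : Type*} (a : I → EuclideanSpace ℝ (Fin n)) (b : I → ℝ) :
    {x : EuclideanSpace ℝ (Fin n) | ∀ i : I, ⟪a i, x⟫ ≤ b i}.Nonempty ↔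
      ((0 : EuclideanSpace ℝ (Fin n)), (1 : ℝ)) ∉
        closure (coneHull {z : EuclideanSpace ℝ (Fin n) × ℝ | ∃ i : I, z = (-a i, -b i)}) := by
  simp only [mem_closure_coneHull_iff, Set.mem_ofPred_eq, forall_exists_index,
    forall_eq_apply_imp_iff, not_forall, not_le, exists_prop]
  constructor
  · rintro ⟨x, hx⟩
    refine ⟨(innerSL ℝ x).comp (.fst ℝ _ _) - .snd ℝ _ _, fun i => ?_, by simp⟩
    simpa [real_inner_comm x] using hx i
  · rintro ⟨f, hf, hf01⟩
    obtain ⟨y, hy⟩ := f.exists_apply_prod_eq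
    refine ⟨(-f (0, 1))⁻¹ • y, fun i => ?_⟩
    have := hf i
    rw [hy, inner_neg_right] at this
    rw [real_inner_smul_right, real_inner_comm, inv_mul_le_iff₀ (by linarith)]
    linarith
end

section
/- Let a ∈ ℝⁿ, b ∈ ℝ and x̄ ∈ ℝⁿ with aᵀx̄ ≤ b, and assume (a,b) ≠ (0,0) or aᵀx̄ < b. Then x̄ satisfies the perturbed inequality (a + αu)ᵀ x̄ ≤ b + αv for all (u,v) in the closed unit ball of ℝⁿ⁺¹ if and only if α · ‖(x̄, −1)‖ ≤ b − aᵀx̄, i.e. the largest robust radius for this single constraint at x̄ equals (b − aᵀx̄)/√(‖x̄‖² + 1). -/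
/-!
The perturbed inequality reads `α * (⟪u, x̄⟫ - v) ≤ b - ⟪a, x̄⟫`, so robust feasibility amounts to
bounding `α` times the support function of the unit ball of `E × ℝ` at `(x̄, -1)`. By
Cauchy–Schwarz in `ℝ²` that support value is `√(‖x̄‖² + 1)`, attained at `(x̄, -1) / √(‖x̄‖² + 1)`.
-/

open scoped RealInnerProductSpace

section SupportFunction

variable {E : Type*} [NormedAddCommGroup E] [InnerProductSpace ℝ E]

theorem inner_sub_le_sqrt_norm_sq_add_one {u x : E} {v : ℝ} (huv : ‖u‖ ^ 2 + v ^ 2 ≤ 1) :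
    ⟪u, x⟫ - v ≤ Real.sqrt (‖x‖ ^ 2 + 1) := by
  have hsq : (‖u‖ * ‖x‖ - v) ^ 2 ≤ ‖x‖ ^ 2 + 1 := by
    nlinarith [sq_nonneg (‖u‖ + ‖x‖ * v), sq_nonneg ‖x‖]
  calc ⟪u, x⟫ - v ≤ ‖u‖ * ‖x‖ - v := by linarith [real_inner_le_norm u x]
    _ ≤ |‖u‖ * ‖x‖ - v| := le_abs_self _
    _ ≤ Real.sqrt (‖x‖ ^ 2 + 1) := Real.abs_le_sqrt hsq

theorem exists_inner_sub_eq_sqrt_norm_sq_add_one (x : E) :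
    ∃ u : E, ∃ v : ℝ, ‖u‖ ^ 2 + v ^ 2 ≤ 1 ∧ ⟪u, x⟫ - v = Real.sqrt (‖x‖ ^ 2 + 1) := by
  set s := Real.sqrt (‖x‖ ^ 2 + 1)
  have hs2 : s ^ 2 = ‖x‖ ^ 2 + 1 := Real.sq_sqrt (by positivity)
  have hs : 0 < s := Real.sqrt_pos.mpr (by positivity)
  refine ⟨s⁻¹ • x, -s⁻¹, le_of_eq ?_, ?_⟩
  · rw [norm_smul, Real.norm_of_nonneg (inv_nonneg.mpr hs.le)]
    field_simp
    linarith
  · rw [real_inner_smul_left, real_inner_self_eq_norm_sq]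
    field_simp
    linarith

end SupportFunction

theorem single_constraint_robust_radius_general
    {n : ℕ} (a : EuclideanSpace ℝ (Fin n)) (b : ℝ) (xbar : EuclideanSpace ℝ (Fin n))
    (α : ℝ) (hα : 0 ≤ α) :
    ((∀ (u : EuclideanSpace ℝ (Fin n)) (v : ℝ), ‖u‖ ^ 2 + v ^ 2 ≤ 1 →
        ⟪a + α • u, xbar⟫ ≤ b + α * v) ↔
      α * Real.sqrt (‖xbar‖ ^ 2 + 1) ≤ b - ⟪a, xbar⟫) := by
  have perturbed_iff : ∀ (u : EuclideanSpace ℝ (Fin n)) (v : ℝ),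
      ⟪a + α • u, xbar⟫ ≤ b + α * v ↔ α * (⟪u, xbar⟫ - v) ≤ b - ⟪a, xbar⟫ := by
    intro u v
    rw [inner_add_left, real_inner_smul_left]
    constructor <;> intro h <;> linarith
  constructor
  · intro h
    obtain ⟨u, v, huv, hmax⟩ := exists_inner_sub_eq_sqrt_norm_sq_add_one xbar
    rw [← hmax]
    exact (perturbed_iff u v).1 (h u v huv)
  · intro h u v huv
    rw [perturbed_iff]
    exact (mul_le_mul_of_nonneg_left (inner_sub_le_sqrt_norm_sq_add_one huv) hα).trans h

theorem single_constraint_robust_radius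
    {n : ℕ} (a : EuclideanSpace ℝ (Fin n)) (b : ℝ) (xbar : EuclideanSpace ℝ (Fin n))
    (α : ℝ) (hα : 0 ≤ α) (hfeas : ⟪a, xbar⟫ ≤ b)
    (hne : (a, b) ≠ (0, (0 : ℝ)) ∨ ⟪a, xbar⟫ < b) :
    ((∀ (u : EuclideanSpace ℝ (Fin n)) (v : ℝ), ‖u‖ ^ 2 + v ^ 2 ≤ 1 →
        ⟪a + α • u, xbar⟫ ≤ b + α * v) ↔
      α * Real.sqrt (‖xbar‖ ^ 2 + 1) ≤ b - ⟪a, xbar⟫) :=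
  single_constraint_robust_radius_general a b xbar α hα
end
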